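/- arXiv:2402.08685 — 7 statements merged into one kernel-verified Lean document; each statement's English description precedes it below -/
import Mathlib

section
/- Let V : ℝ² → ℝ be C¹ with V(x) > 0 for all x, and suppose that for each x ∈ ℝ² the function t ↦ V(tx) - (1/2)⟨∇V(tx), tx⟩ is nondecreasing on (0, ∞). Then ⟨∇V(x), x⟩ ≥ 0 for all x ∈ ℝ². -/
open scoped RealInnerProductSpace

theorem stmt_3 (V : EuclideanSpace ℝ (Fin 2) → ℝ)
    (hV : ContDiff ℝ 1 V) (hVpos : ∀ x, 0 < V x)
    (hmono : ∀ x : EuclideanSpace ℝ (Fin 2),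
      MonotoneOn (fun t : ℝ => V (t • x) - (1 / 2) * ⟪gradient V (t • x), t • x⟫)
        (Set.Ioi (0 : ℝ))) :
    ∀ x : EuclideanSpace ℝ (Fin 2), 0 ≤ ⟪gradient V x, x⟫ := by
  intro x
  by_contra hneg
  push_neg at hneg
  have hdiff : ∀ y, DifferentiableAt ℝ V y := fun y => hV.differentiable one_ne_zero y
  have hinner : ∀ y v, ⟪gradient V y, v⟫ = fderiv ℝ V y v := by
    intro y v
    simp [gradient, InnerProductSpace.toDual_symm_apply]
  set g : ℝ → ℝ := fun t => V (t • x) with hgdef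
  set g' : ℝ → ℝ := fun t => fderiv ℝ V (t • x) x with hg'def
  have hg : ∀ t : ℝ, HasDerivAt g (g' t) t := by
    intro t
    have h1 : HasDerivAt (fun t : ℝ => t • x) x t := by
      simpa using (hasDerivAt_id t).smul_const x
    exact (hdiff (t • x)).hasFDerivAt.comp_hasDerivAt t h1
  set c : ℝ := V x - (1 / 2) * ⟪gradient V x, x⟫ with hcdef
  have hcV : V x < c := by rw [hcdef]; nlinarith
  have hc0 : 0 < c := lt_trans (hVpos x) hcV
  have hval : ∀ t : ℝ,
      V (t • x) - (1 / 2) * ⟪gradient V (t • x), t • x⟫ = g t - (1 / 2) * (t * g' t) := by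
    intro t
    have h : ⟪gradient V (t • x), t • x⟫ = t * g' t := by
      rw [real_inner_smul_right, hinner]
    rw [h]
  have hh : ∀ t : ℝ, 1 ≤ t → c ≤ g t - (1 / 2) * (t * g' t) := by
    intro t ht
    have h1 : (1 : ℝ) ∈ Set.Ioi (0 : ℝ) := by norm_num
    have h2 : t ∈ Set.Ioi (0 : ℝ) := by simp only [Set.mem_Ioi]; linarith
    have hm := hmono x h1 h2 ht
    simp only at hm
    rw [hval 1, hval t] at hm
    have hg1 : g 1 = V x := by simp [hgdef]
    have hg'1 : g' 1 = ⟪gradient V x, x⟫ := by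
      rw [hinner]; simp [hg'def]
    rw [hg1, hg'1] at hm
    calc c = V x - 1 / 2 * (1 * ⟪gradient V x, x⟫) := by rw [hcdef]; ring
    _ ≤ _ := hm
  set ψ : ℝ → ℝ := fun t => (g t - c) / t ^ 2 with hψdef
  have hψd : ∀ t : ℝ, 0 < t →
      HasDerivAt ψ ((g' t * t ^ 2 - (g t - c) * (2 * t)) / (t ^ 2) ^ 2) t := by
    intro t ht
    have h1 : HasDerivAt (fun t : ℝ => g t - c) (g' t) t := (hg t).sub_const c
    have h2 : HasDerivAt (fun t : ℝ => t ^ 2) (2 * t) t := by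
      simpa using (hasDerivAt_pow 2 t)
    exact h1.div h2 (by positivity)
  have hψ1 : ψ 1 = V x - c := by simp [hψdef, hgdef]
  have hψval : ∀ t : ℝ, ψ t = (V (t • x) - c) / t ^ 2 := fun t => rfl
  clear_value ψ g g' c
  have hanti : AntitoneOn ψ (Set.Ici (1 : ℝ)) := by
    apply antitoneOn_of_deriv_nonpos (convex_Ici 1)
    · intro t ht
      have ht0 : (0 : ℝ) < t := lt_of_lt_of_le one_pos ht
      exact ((hψd t ht0).continuousAt).continuousWithinAt
    · intro t ht
      rw [interior_Ici] at ht
      have ht0 : (0 : ℝ) < t := lt_trans one_pos ht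
      exact ((hψd t ht0).differentiableAt).differentiableWithinAt
    · intro t ht
      rw [interior_Ici] at ht
      have ht1 : (1 : ℝ) < t := ht
      have ht0 : (0 : ℝ) < t := by linarith
      rw [(hψd t ht0).deriv]
      have hle := hh t ht1.le
      have hnum : g' t * t ^ 2 - (g t - c) * (2 * t) ≤ 0 := by
        nlinarith [mul_le_mul_of_nonneg_left hle ht0.le]
      apply div_nonpos_of_nonpos_of_nonneg hnum (by positivity)
  -- choose large T
  obtain ⟨T, hT1, hT2⟩ : ∃ T : ℝ, 1 ≤ T ∧ c / (c - V x) ≤ T ^ 2 := by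
    refine ⟨max 1 (c / (c - V x)) + 1, ?_, ?_⟩
    · have := le_max_left (1 : ℝ) (c / (c - V x)); linarith
    · have h1 := le_max_left (1 : ℝ) (c / (c - V x))
      have h2 := le_max_right (1 : ℝ) (c / (c - V x))
      nlinarith
  have hT0 : (0 : ℝ) < T := by linarith
  have hcontra := hanti Set.self_mem_Ici (Set.mem_Ici.mpr hT1) hT1
  rw [hψ1] at hcontra
  have hψT : -c / T ^ 2 < ψ T := by
    rw [hψval T]
    have hVT := hVpos (T • x)
    have hlt : -c < V (T • x) - c := by linarith
    exact div_lt_div_of_pos_right hlt (by positivity)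
  have hkey : V x - c ≤ -c / T ^ 2 := by
    have hd : 0 < c - V x := by linarith
    rw [div_le_iff₀ hd] at hT2
    rw [le_div_iff₀ (by positivity : (0:ℝ) < T ^ 2)]
    nlinarith
  linarith
end

section
/- Let V : ℝ² → ℝ be C¹ with V ≥ V₀ > 0, and suppose that for each x ∈ ℝ² the function t ↦ V(tx) - (1/2)⟨∇V(tx), tx⟩ is nondecreasing on (0, ∞). Then for all x ∈ ℝ²: V(x) - (1/2)⟨∇V(x), x⟩ ≥ V₀ and 0 ≤ ⟨∇V(x), x⟩ ≤ 2V(x). -/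
/-!
Fix `x` and put `f t = V (t • x)`, so that the monotone quantity is `W t = f t - t f'(t) / 2`.
Since `W 0 = V 0 ≥ V₀` and `W` is continuous at `0`, monotonicity gives `V₀ ≤ W 1`.
For `t ≥ 1` the inequality `W 1 ≤ W t` says exactly that `(f t - W 1) / t²` is antitone, so
`(V₀ - W 1) / t² ≤ f 1 - W 1 = f'(1) / 2 = ⟪∇V x, x⟫ / 2`; letting `t → ∞` gives `0 ≤ ⟪∇V x, x⟫`.
The upper bound `⟪∇V x, x⟫ ≤ 2 V x` is the lower bound on `W 1` together with `V₀ > 0`.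
-/

open scoped RealInnerProductSpace

open Set Filter Topology

section RealFunctions

variable {f f' : ℝ → ℝ} {c : ℝ}

lemma antitoneOn_sub_div_sq_of_le_sub_half_mul_deriv {s : Set ℝ} (hs : Convex ℝ s)
    (hs_pos : s ⊆ Ioi 0) (hf : ∀ t ∈ s, HasDerivAt f (f' t) t)
    (hc : ∀ t ∈ s, c ≤ f t - t / 2 * f' t) :
    AntitoneOn (fun t => (f t - c) / t ^ 2) s := by
  have hderiv : ∀ t ∈ s, HasDerivAt (fun t => (f t - c) / t ^ 2)
      (2 * (c - (f t - t / 2 * f' t)) / t ^ 3) t := by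
    intro t ht
    have ht0 : t ≠ 0 := (hs_pos ht).ne'
    refine (((hf t ht).sub_const c).div (hasDerivAt_pow 2 t) (pow_ne_zero 2 ht0)).congr_deriv ?_
    field_simp
    ring
  refine antitoneOn_of_hasDerivWithinAt_nonpos hs
    (fun t ht => (hderiv t ht).continuousAt.continuousWithinAt)
    (fun t ht => (hderiv t (interior_subset ht)).hasDerivWithinAt) fun t ht => ?_
  have ht := interior_subset ht
  exact div_nonpos_of_nonpos_of_nonneg (by linarith [hc t ht]) (pow_pos (hs_pos ht) 3).le

lemma deriv_nonneg_of_bddBelow_of_le_sub_half_mul_deriv {a m : ℝ} (ha : 0 < a)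
    (hf : ∀ t, a ≤ t → HasDerivAt f (f' t) t) (hm : ∀ t, a ≤ t → m ≤ f t)
    (hc : ∀ t, a ≤ t → f a - a / 2 * f' a ≤ f t - t / 2 * f' t) :
    0 ≤ f' a := by
  set c := f a - a / 2 * f' a
  have hanti := antitoneOn_sub_div_sq_of_le_sub_half_mul_deriv (convex_Ici a)
    (fun t ht => ha.trans_le ht) hf hc
  have hbound : ∀ t, a ≤ t → (m - c) / t ^ 2 ≤ f' a / (2 * a) := by
    intro t ht
    calc (m - c) / t ^ 2 ≤ (f t - c) / t ^ 2 := by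
          gcongr
          exact hm t ht
      _ ≤ (f a - c) / a ^ 2 := hanti (mem_Ici.2 le_rfl) (mem_Ici.2 ht) ht
      _ = f' a / (2 * a) := by
          simp only [c]
          field_simp
          ring
  have hlim : Tendsto (fun t : ℝ => (m - c) / t ^ 2) atTop (𝓝 0) :=
    tendsto_const_nhds.div_atTop (tendsto_pow_atTop two_ne_zero)
  have hlim_le := le_of_tendsto hlim (eventually_atTop.2 ⟨a, hbound⟩)
  simpa using (le_div_iff₀ (by positivity : 0 < 2 * a)).1 hlim_le

end RealFunctions

section Gradient

variable {E : Type*} [NormedAddCommGroup E] [InnerProductSpace ℝ E] [CompleteSpace E]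
  {V : E → ℝ}

lemma hasDerivAt_comp_smul_of_differentiableAt {x : E} {t : ℝ}
    (hV : DifferentiableAt ℝ V (t • x)) :
    HasDerivAt (fun s : ℝ => V (s • x)) ⟪gradient V (t • x), x⟫ t := by
  have hray : HasDerivAt (fun s : ℝ => s • x) x t := by
    simpa using (hasDerivAt_id t).smul_const x
  rw [inner_gradient_left]
  exact hV.hasFDerivAt.comp_hasDerivAt t hray

lemma ContDiff.continuous_gradient (hV : ContDiff ℝ 1 V) : Continuous (gradient V) :=
  (InnerProductSpace.toDual ℝ E).symm.continuous.comp (hV.continuous_fderiv one_ne_zero)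

end Gradient

theorem stmt_4 (V : EuclideanSpace ℝ (Fin 2) → ℝ) (V₀ : ℝ)
    (hV : ContDiff ℝ 1 V) (hV₀ : 0 < V₀) (hVlb : ∀ x, V₀ ≤ V x)
    (hmono : ∀ x : EuclideanSpace ℝ (Fin 2),
      MonotoneOn (fun t : ℝ => V (t • x) - (1 / 2) * ⟪gradient V (t • x), t • x⟫)
        (Set.Ioi (0 : ℝ))) :
    ∀ x : EuclideanSpace ℝ (Fin 2),
      V₀ ≤ V x - (1 / 2) * ⟪gradient V x, x⟫ ∧
      0 ≤ ⟪gradient V x, x⟫ ∧ ⟪gradient V x, x⟫ ≤ 2 * V x := by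
  intro x
  set f : ℝ → ℝ := fun t => V (t • x)
  set f' : ℝ → ℝ := fun t => ⟪gradient V (t • x), x⟫
  set W : ℝ → ℝ := fun t => f t - t / 2 * f' t
  have hWmono : MonotoneOn W (Ioi 0) := (hmono x).congr fun t _ => by
    simp only [W, f, f', real_inner_smul_right]
    ring
  have hray : Continuous fun t : ℝ => t • x := continuous_id.smul continuous_const
  have hWcont : Continuous W := (hV.continuous.comp hray).sub <| continuous_id.div_const 2 |>.mul
    ((hV.continuous_gradient.comp hray).inner continuous_const)
  have hW01 : W 0 ≤ W 1 := by
    have hcluster : ClusterPt (0 : ℝ) (𝓟 (Ioi 0)) := by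
      rw [← mem_closure_iff_clusterPt, closure_Ioi]
      exact self_mem_Ici
    exact (hWmono.insert_of_continuousWithinAt hcluster hWcont.continuousWithinAt)
      (mem_insert 0 _) (mem_insert_of_mem 0 (mem_Ioi.2 one_pos)) zero_le_one
  have hnonneg : 0 ≤ f' 1 :=
    deriv_nonneg_of_bddBelow_of_le_sub_half_mul_deriv one_pos
      (fun t _ => hasDerivAt_comp_smul_of_differentiableAt (hV.differentiable one_ne_zero _))
      (fun t _ => hVlb _)
      fun t ht => hWmono (mem_Ioi.2 one_pos) (mem_Ioi.2 (zero_lt_one.trans_le ht)) ht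
  have hlower : V₀ ≤ W 1 := (hVlb 0).trans (by simpa [W, f, f'] using hW01)
  simp only [W, f, f', one_smul] at hlower hnonneg
  exact ⟨by linarith, hnonneg, by linarith⟩
end

section
/- For fixed x ∈ ℝ², let V : ℝ² → ℝ be C¹ nonnegative such that t ↦ V(tx) - (1/2)⟨∇V(tx), tx⟩ is nondecreasing on (0,∞). Then for every t > 0, t² V(x) + ((1 - t²)/2)⟨∇V(x), x⟩ ≥ t² V(t⁻¹ x) ≥ 0. -/
/-! Put `φ(s) = V(s x)` and `ψ(s) = φ(s) - s φ'(s) / 2`, so that `ψ` is the monotone function of the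
hypothesis. The quotient `G(s) = (φ(s) - ψ(1)) / s²` has `G'(s) = 2 (ψ(1) - ψ(s)) / s³`, which is
`≥ 0` on `(0, 1]` and `≤ 0` on `[1, ∞)`; hence `G(s) ≤ G(1) = φ'(1) / 2`, i.e.
`V(s x) ≤ V(x) + (s² - 1)/2 ⟨∇V(x), x⟩`. Taking `s = t⁻¹` and multiplying by `t²` gives the claim. -/

open scoped RealInnerProductSpace

open Set

theorem isMaxOn_of_hasDerivAt_nonneg_of_nonpos {G G' : ℝ → ℝ} {a c : ℝ} (hac : a < c)
    (hG : ∀ s ∈ Ioi a, HasDerivAt G (G' s) s) (hleft : ∀ s ∈ Ioo a c, 0 ≤ G' s)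
    (hright : ∀ s ∈ Ioi c, G' s ≤ 0) : IsMaxOn G (Ioi a) c := by
  have hcont : ContinuousOn G (Ioi a) := fun s hs => (hG s hs).continuousAt.continuousWithinAt
  intro s hs
  rcases le_total s c with hsc | hcs
  · have hmono : MonotoneOn G (Ioc a c) := by
      refine monotoneOn_of_hasDerivWithinAt_nonneg (f' := G') (convex_Ioc a c)
        (hcont.mono Ioc_subset_Ioi_self) (fun u hu => ?_) (fun u hu => ?_)
      all_goals rw [interior_Ioc] at hu
      exacts [(hG u hu.1).hasDerivWithinAt, hleft u hu]
    exact hmono ⟨hs, hsc⟩ ⟨hac, le_rfl⟩ hsc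
  · have hanti : AntitoneOn G (Ici c) := by
      refine antitoneOn_of_hasDerivWithinAt_nonpos (f' := G') (convex_Ici c)
        (hcont.mono (Ici_subset_Ioi.2 hac)) (fun u hu => ?_) (fun u hu => ?_)
      all_goals rw [interior_Ici] at hu
      exacts [(hG u (hac.trans hu)).hasDerivWithinAt, hright u hu]
    exact hanti self_mem_Ici hcs hcs

theorem le_add_sq_sub_one_mul_deriv_of_monotoneOn {φ φ' : ℝ → ℝ}
    (hφ : ∀ s ∈ Ioi (0 : ℝ), HasDerivAt φ (φ' s) s)
    (hmono : MonotoneOn (fun s => φ s - s * φ' s / 2) (Ioi 0)) {s : ℝ} (hs : 0 < s) :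
    φ s ≤ φ 1 + (s ^ 2 - 1) / 2 * φ' 1 := by
  set ψ : ℝ → ℝ := fun s => φ s - s * φ' s / 2 with hψ
  have hG : ∀ u ∈ Ioi (0 : ℝ),
      HasDerivAt (fun u => (φ u - ψ 1) / u ^ 2) (2 * (ψ 1 - ψ u) / u ^ 3) u := by
    intro u (hu : 0 < u)
    refine (((hφ u hu).sub_const (ψ 1)).div (hasDerivAt_pow 2 u) (by positivity)).congr_deriv ?_
    simp only [hψ, Nat.cast_ofNat, Nat.add_one_sub_one, pow_one]
    field_simp
    ring
  have h1 : (1 : ℝ) ∈ Ioi 0 := mem_Ioi.2 one_pos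
  have hmax : (φ s - ψ 1) / s ^ 2 ≤ (φ 1 - ψ 1) / 1 ^ 2 :=
    isMaxOn_of_hasDerivAt_nonneg_of_nonpos one_pos hG
      (fun u hu => div_nonneg (by linarith [hmono hu.1 h1 hu.2.le]) (pow_nonneg hu.1.le 3))
      (fun u (hu : 1 < u) => div_nonpos_of_nonpos_of_nonneg
        (by linarith [hmono h1 (zero_lt_one.trans hu) hu.le]) (by positivity))
      (mem_Ioi.2 hs)
  rw [one_pow, div_one, div_le_iff₀ (by positivity)] at hmax
  simp only [hψ] at hmax
  linarith

theorem hasDerivAt_comp_smul {E : Type*} [NormedAddCommGroup E] [InnerProductSpace ℝ E]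
    [CompleteSpace E] {V : E → ℝ} {x : E} {s : ℝ} (hV : DifferentiableAt ℝ V (s • x)) :
    HasDerivAt (fun u : ℝ => V (u • x)) ⟪gradient V (s • x), x⟫ s := by
  rw [inner_gradient_left]
  have h := hV.hasFDerivAt.comp_hasDerivAt s ((hasDerivAt_id s).smul_const x)
  rwa [one_smul] at h

theorem stmt_5 (V : EuclideanSpace ℝ (Fin 2) → ℝ) (x : EuclideanSpace ℝ (Fin 2))
    (hV : ContDiff ℝ 1 V) (hVnonneg : ∀ y, 0 ≤ V y)
    (hmono : MonotoneOn (fun t : ℝ => V (t • x) - (1 / 2) * ⟪gradient V (t • x), t • x⟫)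
        (Set.Ioi (0 : ℝ))) :
    ∀ t : ℝ, 0 < t →
      t ^ 2 * V x + ((1 - t ^ 2) / 2) * ⟪gradient V x, x⟫ ≥ t ^ 2 * V (t⁻¹ • x) ∧
      (0 : ℝ) ≤ t ^ 2 * V (t⁻¹ • x) := by
  intro t ht
  have hψmono :
      MonotoneOn (fun s : ℝ => V (s • x) - s * ⟪gradient V (s • x), x⟫ / 2) (Ioi 0) := by
    convert hmono using 2 with s
    rw [real_inner_smul_right]
    ring
  have hradial := le_add_sq_sub_one_mul_deriv_of_monotoneOn
    (fun s _ => hasDerivAt_comp_smul (hV.differentiable one_ne_zero _)) hψmono (inv_pos.2 ht)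
  simp only [one_smul] at hradial
  refine ⟨?_, mul_nonneg (sq_nonneg t) (hVnonneg _)⟩
  have hscale : t ^ 2 * ((t⁻¹ ^ 2 - 1) / 2 * ⟪gradient V x, x⟫) =
      (1 - t ^ 2) / 2 * ⟪gradient V x, x⟫ := by
    field_simp
  linarith [mul_le_mul_of_nonneg_left hradial (sq_nonneg t)]
end

section
/- Let β : (0,∞) → ℝ be C¹ such that t ↦ β'(t)/t is non-increasing on (0,∞) and bounded below by a positive constant. Let C₁, C₃ > 0, C₄ ≥ 0, C₂ ∈ ℝ, and p ≥ 3. Then the function g(t) = C₁β(t) + C₂t⁴ - C₃ t⁴ log t - C₄ t^{2p-2} has a unique critical point t₀ ∈ (0,∞), and g'(t) > 0 for t < t₀ while g'(t) < 0 for t > t₀. -/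
/-!
For `t > 0` one has `g'(t) = t³ h(t)`, where `h` is `reducedDeriv` below. Every term of `h` is
non-increasing (this is where `β'(t)/t` antitone and positive, `C₄ ≥ 0` and `p ≥ 3` enter) and
`-4C₃ log t` is strictly decreasing, so `h` is strictly decreasing. The logarithm makes `h` positive
near `0` and negative near `∞`, so by the intermediate value theorem `h`, and hence `g'`, changes
sign exactly once.
-/

open Real Set

theorem IsPreconnected.exists_sign_change_of_strictAntiOn {α δ : Type*} [TopologicalSpace α]
    [LinearOrder α] [OrderClosedTopology α] [TopologicalSpace δ] [LinearOrder δ]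
    [OrderClosedTopology δ] [Zero δ] {s : Set α} (hs : IsPreconnected s) {f : α → δ}
    (hf : ContinuousOn f s) (hanti : StrictAntiOn f s) {a b : α} (ha : a ∈ s) (hb : b ∈ s)
    (hfa : 0 < f a) (hfb : f b < 0) :
    ∃ t₀ ∈ s, f t₀ = 0 ∧ (∀ t ∈ s, t < t₀ → 0 < f t) ∧ (∀ t ∈ s, t₀ < t → f t < 0) := by
  obtain ⟨t₀, ht₀, hft₀⟩ := hs.intermediate_value hb ha hf ⟨hfb.le, hfa.le⟩
  refine ⟨t₀, ht₀, hft₀, fun t ht htt => ?_, fun t ht htt => ?_⟩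
  · exact hft₀ ▸ hanti ht ht₀ htt
  · exact hft₀ ▸ hanti ht₀ ht htt

namespace CriticalPoint

variable (β β' : ℝ → ℝ) (C₁ C₂ C₃ C₄ p : ℝ)

/-- `g'(t) / t³`, where `g(t) = C₁ β(t) + C₂ t⁴ - C₃ t⁴ log t - C₄ t^(2p-2)`. -/
noncomputable def reducedDeriv (t : ℝ) : ℝ :=
  C₁ * (β' t / t) / t ^ 2 + (4 * C₂ - C₃) - 4 * C₃ * log t - C₄ * (2 * p - 2) * t ^ (2 * p - 6)

variable {β β' C₁ C₂ C₃ C₄ p}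

theorem hasDerivAt_pow_three_mul_reducedDeriv {t : ℝ} (ht : 0 < t) (hβ : HasDerivAt β (β' t) t) :
    HasDerivAt (fun t : ℝ => C₁ * β t + C₂ * t ^ 4 - C₃ * t ^ 4 * log t - C₄ * t ^ (2 * p - 2))
      (t ^ 3 * reducedDeriv β' C₁ C₂ C₃ C₄ p t) t := by
  have hlog := ((hasDerivAt_pow 4 t).const_mul C₃).mul (hasDerivAt_log ht.ne')
  have hrpow := (hasDerivAt_rpow_const (p := 2 * p - 2) (Or.inl ht.ne')).const_mul C₄
  refine ((((hβ.const_mul C₁).add ((hasDerivAt_pow 4 t).const_mul C₂)).sub hlog).sub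
    hrpow).congr_deriv ?_
  have hexp : t ^ (2 * p - 2 - 1) = t ^ 3 * t ^ (2 * p - 6) := by
    rw [← rpow_natCast t 3, ← rpow_add ht]
    norm_num
    ring_nf
  rw [reducedDeriv, hexp]
  field_simp
  ring

theorem continuousOn_reducedDeriv (hβ' : ContinuousOn β' (Ioi 0)) :
    ContinuousOn (reducedDeriv β' C₁ C₂ C₃ C₄ p) (Ioi 0) := by
  have hne : ∀ t ∈ Ioi (0 : ℝ), t ≠ 0 := fun t ht => ht.ne'
  unfold reducedDeriv
  refine ((ContinuousOn.add ?_ continuousOn_const).sub ?_).sub ?_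
  · exact (continuousOn_const.mul (hβ'.div continuousOn_id hne)).div (continuousOn_pow 2)
      fun t ht => pow_ne_zero 2 (hne t ht)
  · exact continuousOn_const.mul (continuousOn_log.mono hne)
  · exact continuousOn_const.mul (continuousOn_id.rpow_const fun t ht => Or.inl (hne t ht))

variable (hC₁ : 0 ≤ C₁) (hC₄ : 0 ≤ C₄) (hp : 3 ≤ p)
  (hβ'nonneg : ∀ t ∈ Ioi (0 : ℝ), 0 ≤ β' t / t)
include hC₁ hC₄ hp hβ'nonneg

theorem strictAntiOn_reducedDeriv (hC₃ : 0 < C₃)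
    (hβ'mono : AntitoneOn (fun t => β' t / t) (Ioi 0)) :
    StrictAntiOn (reducedDeriv β' C₁ C₂ C₃ C₄ p) (Ioi 0) := by
  intro a ha b hb hab
  have hβ'term : C₁ * (β' b / b) / b ^ 2 ≤ C₁ * (β' a / a) / a ^ 2 :=
    div_le_div₀ (mul_nonneg hC₁ (hβ'nonneg a ha))
      (mul_le_mul_of_nonneg_left (hβ'mono ha hb hab.le) hC₁) (pow_pos ha 2)
      (pow_le_pow_left₀ (le_of_lt ha) hab.le 2)
  have hlog : log a < log b := log_lt_log ha hab
  have hrpow : C₄ * (2 * p - 2) * a ^ (2 * p - 6) ≤ C₄ * (2 * p - 2) * b ^ (2 * p - 6) :=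
    mul_le_mul_of_nonneg_left (rpow_le_rpow (le_of_lt ha) hab.le (by linarith))
      (mul_nonneg hC₄ (by linarith))
  simp only [reducedDeriv]
  nlinarith

theorem exists_reducedDeriv_pos (hC₃ : 0 < C₃) :
    ∃ a > 0, 0 < reducedDeriv β' C₁ C₂ C₃ C₄ p a := by
  set K := (|4 * C₂ - C₃| + C₄ * (2 * p - 2) + 1) / (4 * C₃)
  have hK : 4 * C₃ * K = |4 * C₂ - C₃| + C₄ * (2 * p - 2) + 1 := by simp only [K]; field_simp
  have hK0 : 0 ≤ K := div_nonneg (by nlinarith [abs_nonneg (4 * C₂ - C₃)]) (by linarith)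
  refine ⟨exp (-K), exp_pos _, ?_⟩
  have hβ'term : 0 ≤ C₁ * (β' (exp (-K)) / exp (-K)) / exp (-K) ^ 2 :=
    div_nonneg (mul_nonneg hC₁ (hβ'nonneg _ (exp_pos _))) (sq_nonneg _)
  have hrpow : exp (-K) ^ (2 * p - 6) ≤ 1 :=
    rpow_le_one (exp_pos _).le (exp_le_one_iff.mpr (by linarith)) (by linarith)
  have hrpow' :=
    mul_le_mul_of_nonneg_left hrpow (mul_nonneg hC₄ (by linarith : (0 : ℝ) ≤ 2 * p - 2))
  simp only [reducedDeriv, log_exp]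
  nlinarith [neg_abs_le (4 * C₂ - C₃)]

theorem exists_reducedDeriv_neg (hC₃ : 0 < C₃)
    (hβ'mono : AntitoneOn (fun t => β' t / t) (Ioi 0)) :
    ∃ b > 0, reducedDeriv β' C₁ C₂ C₃ C₄ p b < 0 := by
  set K := (C₁ * |β' 1| + |4 * C₂ - C₃| + 1) / (4 * C₃)
  have hK : 4 * C₃ * K = C₁ * |β' 1| + |4 * C₂ - C₃| + 1 := by simp only [K]; field_simp
  have hK0 : 0 ≤ K :=
    div_nonneg (by nlinarith [abs_nonneg (4 * C₂ - C₃), abs_nonneg (β' 1)]) (by linarith)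
  set b := exp K
  have hb1 : 1 ≤ b := one_le_exp hK0
  have hb0 : 0 < b := exp_pos K
  refine ⟨b, hb0, ?_⟩
  have hβ'b : β' b / b ≤ |β' 1| := by
    simpa using (hβ'mono (mem_Ioi.mpr one_pos) hb0 hb1).trans (le_abs_self (β' 1 / 1))
  have hβ'term : C₁ * (β' b / b) / b ^ 2 ≤ C₁ * |β' 1| :=
    (div_le_self (mul_nonneg hC₁ (hβ'nonneg b hb0)) (one_le_pow₀ hb1)).trans
      (mul_le_mul_of_nonneg_left hβ'b hC₁)
  have hrpow : 0 ≤ C₄ * (2 * p - 2) * b ^ (2 * p - 6) :=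
    mul_nonneg (mul_nonneg hC₄ (by linarith)) (rpow_nonneg hb0.le _)
  simp only [reducedDeriv, b, log_exp]
  linarith [le_abs_self (4 * C₂ - C₃)]

end CriticalPoint

open CriticalPoint in
theorem stmt_6 (β β' : ℝ → ℝ) (C₁ C₂ C₃ C₄ p : ℝ)
    (hβ : ∀ t ∈ Set.Ioi (0 : ℝ), HasDerivAt β (β' t) t)
    (hβ'cont : ContinuousOn β' (Set.Ioi (0 : ℝ)))
    (hβ'mono : AntitoneOn (fun t => β' t / t) (Set.Ioi (0 : ℝ)))
    (hβ'lb : ∃ m > (0 : ℝ), ∀ t ∈ Set.Ioi (0 : ℝ), m ≤ β' t / t)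
    (hC₁ : 0 < C₁) (hC₃ : 0 < C₃) (hC₄ : 0 ≤ C₄) (hp : 3 ≤ p) :
    ∃ t₀ : ℝ, 0 < t₀ ∧
      deriv (fun t : ℝ => C₁ * β t + C₂ * t ^ 4 - C₃ * t ^ 4 * Real.log t
        - C₄ * t ^ (2 * p - 2)) t₀ = 0 ∧
      (∀ t : ℝ, 0 < t → t < t₀ →
        0 < deriv (fun t : ℝ => C₁ * β t + C₂ * t ^ 4 - C₃ * t ^ 4 * Real.log t
          - C₄ * t ^ (2 * p - 2)) t) ∧
      (∀ t : ℝ, t₀ < t →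
        deriv (fun t : ℝ => C₁ * β t + C₂ * t ^ 4 - C₃ * t ^ 4 * Real.log t
          - C₄ * t ^ (2 * p - 2)) t < 0) := by
  obtain ⟨m, hm, hmle⟩ := hβ'lb
  have hβ'nonneg : ∀ t ∈ Ioi (0 : ℝ), 0 ≤ β' t / t := fun t ht => hm.le.trans (hmle t ht)
  obtain ⟨a, ha, hha⟩ := exists_reducedDeriv_pos (C₂ := C₂) hC₁.le hC₄ hp hβ'nonneg hC₃
  obtain ⟨b, hb, hhb⟩ := exists_reducedDeriv_neg (C₂ := C₂) hC₁.le hC₄ hp hβ'nonneg hC₃ hβ'mono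
  obtain ⟨t₀, ht₀, hzero, hpos, hneg⟩ := isPreconnected_Ioi.exists_sign_change_of_strictAntiOn
    (continuousOn_reducedDeriv hβ'cont)
    (strictAntiOn_reducedDeriv hC₁.le hC₄ hp hβ'nonneg hC₃ hβ'mono) ha hb hha hhb
  have hderiv : ∀ t > 0, deriv (fun t : ℝ => C₁ * β t + C₂ * t ^ 4 - C₃ * t ^ 4 * Real.log t
      - C₄ * t ^ (2 * p - 2)) t = t ^ 3 * reducedDeriv β' C₁ C₂ C₃ C₄ p t :=
    fun t ht => (hasDerivAt_pow_three_mul_reducedDeriv ht (hβ t ht)).deriv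
  refine ⟨t₀, ht₀, by rw [hderiv t₀ ht₀, hzero, mul_zero], fun t ht htt => ?_, fun t htt => ?_⟩
  · rw [hderiv t ht]
    exact mul_pos (pow_pos ht 3) (hpos t ht htt)
  · have ht : 0 < t := lt_trans ht₀ htt
    rw [hderiv t ht]
    exact mul_neg_of_pos_of_neg (pow_pos ht 3) (hneg t ht htt)
end

section
/- Let {u_n} be a sequence in L²(ℝ²) converging pointwise a.e. to some u ∈ L²(ℝ²) with u ≠ 0, and let {v_n} be bounded in L²(ℝ²) with sup_n ∫∫ log(1+|x-y|) u_n(x)² v_n(y)² dx dy < ∞. Then there exist n₀ ∈ ℕ and C > 0 such that ∫ log(1+|x|) v_n(x)² dx < C for all n ≥ n₀. -/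
/-!
By Fatou's lemma and `U ≠ 0`, some ball `B_R` and `c > 0` satisfy `c < ∫_{B_R} u_n²` for all
large `n`. For `|x| ≤ R` we have `log (1 + |y|) - log (1 + R) ≤ log (1 + |x - y|)`, so integrating
against `u_n(x)² v_n(y)²` over `B_R × ℝ²` bounds `c ∫ (log (1 + |y|) - log (1 + R))₊ v_n(y)² dy` by
the double integral. The rest of `∫ log (1 + |y|) v_n(y)² dy` is at most `log (1 + R) ∫ v_n²`.
-/

open MeasureTheory Filter Metric
open scoped ENNReal Topology

theorem Real.log_one_add_norm_le_add {E : Type*} [SeminormedAddCommGroup E] (x y : E) :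
    Real.log (1 + ‖y‖) ≤ Real.log (1 + ‖x - y‖) + Real.log (1 + ‖x‖) := by
  have hy : ‖y‖ ≤ ‖x - y‖ + ‖x‖ := by
    simpa using norm_sub_le (x - y) x
  rw [← Real.log_mul (by positivity) (by positivity)]
  exact Real.log_le_log (by positivity) (by nlinarith [norm_nonneg x, norm_nonneg (x - y)])

theorem ENNReal.ofReal_log_one_add_norm_tsub_le {E : Type*} [SeminormedAddCommGroup E]
    {R : ℝ} {x : E} (hx : ‖x‖ ≤ R) (y : E) :
    ENNReal.ofReal (Real.log (1 + ‖y‖)) - ENNReal.ofReal (Real.log (1 + R)) ≤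
      ENNReal.ofReal (Real.log (1 + ‖x - y‖)) := by
  have hR : 0 ≤ R := (norm_nonneg x).trans hx
  rw [tsub_le_iff_right,
    ← ENNReal.ofReal_add (Real.log_nonneg (by simp)) (Real.log_nonneg (by simpa))]
  exact ENNReal.ofReal_le_ofReal ((Real.log_one_add_norm_le_add x y).trans (by gcongr))

theorem lintegral_mul_le_lintegral_tsub_mul_add {α : Type*} [MeasurableSpace α] {μ : Measure α}
    {b : α → ℝ≥0∞} (hb : AEMeasurable b μ) (w : α → ℝ≥0∞) (r : ℝ≥0∞) :
    ∫⁻ y, w y * b y ∂μ ≤ ∫⁻ y, (w y - r) * b y ∂μ + r * ∫⁻ y, b y ∂μ := by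
  calc ∫⁻ y, w y * b y ∂μ ≤ ∫⁻ y, (w y - r) * b y + r * b y ∂μ :=
        lintegral_mono fun y => by rw [← add_mul]; gcongr; exact le_tsub_add
    _ = _ := by rw [lintegral_add_right' _ (hb.const_mul r), lintegral_const_mul'' r hb]

theorem exists_pos_setLIntegral_closedBall {E : Type*} [PseudoMetricSpace E] [MeasurableSpace E]
    {μ : Measure E} {F : E → ℝ≥0∞} (hF : AEMeasurable F μ) (hF0 : ¬ F =ᵐ[μ] 0) (x₀ : E) :
    ∃ R : ℝ, 0 < ∫⁻ x in closedBall x₀ R, F x ∂μ := by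
  by_contra! h
  refine hF0 ((lintegral_eq_zero_iff' hF).1 (le_antisymm ?_ zero_le))
  calc ∫⁻ x, F x ∂μ = ∫⁻ x in ⋃ n : ℕ, closedBall x₀ n, F x ∂μ := by
        rw [iUnion_closedBall_nat, setLIntegral_univ]
    _ ≤ ∑' n : ℕ, ∫⁻ x in closedBall x₀ n, F x ∂μ := lintegral_iUnion_le _ _
    _ = 0 := ENNReal.tsum_eq_zero.2 fun n => nonpos_iff_eq_zero.1 (h n)

theorem exists_closedBall_eventually_lt_setLIntegral {E : Type*} [PseudoMetricSpace E]
    [MeasurableSpace E] {μ : Measure E} {f : ℕ → E → ℝ≥0∞} {F : E → ℝ≥0∞}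
    (hf : ∀ n, AEMeasurable (f n) μ) (hlim : ∀ᵐ x ∂μ, Tendsto (fun n => f n x) atTop (𝓝 (F x)))
    (hF0 : ¬ F =ᵐ[μ] 0) (x₀ : E) :
    ∃ R : ℝ, ∃ c : ℝ≥0∞, 0 < c ∧ ∀ᶠ n in atTop, c < ∫⁻ x in closedBall x₀ R, f n x ∂μ := by
  obtain ⟨R, hR⟩ :=
    exists_pos_setLIntegral_closedBall (aemeasurable_of_tendsto_metrizable_ae' hf hlim) hF0 x₀
  have hfatou : ∫⁻ x in closedBall x₀ R, F x ∂μ ≤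
      liminf (fun n => ∫⁻ x in closedBall x₀ R, f n x ∂μ) atTop := by
    calc ∫⁻ x in closedBall x₀ R, F x ∂μ
        = ∫⁻ x in closedBall x₀ R, liminf (fun n => f n x) atTop ∂μ :=
          lintegral_congr_ae (ae_restrict_of_ae (hlim.mono fun x hx => hx.liminf_eq.symm))
      _ ≤ _ := lintegral_liminf_le' fun n => (hf n).restrict
  obtain ⟨c, hc, hc_lt⟩ := exists_between (hR.trans_le hfatou)
  exact ⟨R, c, hc, eventually_lt_of_lt_liminf hc_lt⟩

theorem setLIntegral_closedBall_mul_lintegral_le_lintegral_prod {E : Type*}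
    [NormedAddCommGroup E] [MeasurableSpace E] [BorelSpace E] [SecondCountableTopology E]
    {μ ν : Measure E} [SFinite ν] {a b : E → ℝ≥0∞} (ha : AEMeasurable a μ)
    (hb : AEMeasurable b ν) (R : ℝ) :
    (∫⁻ x in closedBall 0 R, a x ∂μ) *
        ∫⁻ y, (ENNReal.ofReal (Real.log (1 + ‖y‖)) - ENNReal.ofReal (Real.log (1 + R))) * b y ∂ν
      ≤ ∫⁻ z, ENNReal.ofReal (Real.log (1 + ‖z.1 - z.2‖)) * a z.1 * b z.2 ∂μ.prod ν := by
  calc _ ≤ ∫⁻ x in closedBall 0 R, a x * ∫⁻ y,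
          (ENNReal.ofReal (Real.log (1 + ‖y‖)) - ENNReal.ofReal (Real.log (1 + R))) * b y ∂ν ∂μ :=
        lintegral_mul_const_le _ _
    _ ≤ ∫⁻ x in closedBall 0 R, ∫⁻ y,
          ENNReal.ofReal (Real.log (1 + ‖x - y‖)) * a x * b y ∂ν ∂μ := by
        refine setLIntegral_mono' measurableSet_closedBall fun x hx => ?_
        refine (lintegral_const_mul_le _ _).trans (lintegral_mono fun y => ?_)
        rw [mul_comm _ (a x), mul_assoc]
        gcongr
        exact ENNReal.ofReal_log_one_add_norm_tsub_le (mem_closedBall_zero_iff.1 hx) y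
    _ ≤ ∫⁻ x, ∫⁻ y, ENNReal.ofReal (Real.log (1 + ‖x - y‖)) * a x * b y ∂ν ∂μ :=
        setLIntegral_le_lintegral _ _
    _ = _ := by rw [lintegral_prod _ (by fun_prop)]

theorem MeasureTheory.MemLp.lintegral_ofReal_sq_le {α : Type*} [MeasurableSpace α]
    {μ : Measure α} {f : α → ℝ} (hf : MemLp f 2 μ) {M : ℝ} (hM : ∫ x, f x ^ 2 ∂μ ≤ M) :
    ∫⁻ x, ENNReal.ofReal (f x ^ 2) ∂μ ≤ ENNReal.ofReal M := by
  rw [← ofReal_integral_eq_lintegral_ofReal hf.integrable_sq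
    (Eventually.of_forall fun x => sq_nonneg _)]
  exact ENNReal.ofReal_le_ofReal hM

theorem ENNReal.exists_pos_lt_ofReal {a : ℝ≥0∞} (ha : a < ⊤) :
    ∃ C : ℝ, 0 < C ∧ a < ENNReal.ofReal C := by
  obtain ⟨C, -, haC, -⟩ := ENNReal.lt_iff_exists_real_btwn.1 ha
  exact ⟨C, ENNReal.ofReal_pos.1 (pos_of_gt haC), haC⟩

theorem stmt_13_general (u v : ℕ → EuclideanSpace ℝ (Fin 2) → ℝ) (U : EuclideanSpace ℝ (Fin 2) → ℝ)
    (hu : ∀ n, MemLp (u n) 2 volume)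
    (hU0 : ¬ U =ᵐ[volume] (0 : EuclideanSpace ℝ (Fin 2) → ℝ))
    (hconv : ∀ᵐ x ∂volume, Tendsto (fun n => u n x) atTop (nhds (U x)))
    (hv : ∀ n, MemLp (v n) 2 volume)
    (hvb : ∃ M : ℝ, ∀ n, ∫ x, (v n x) ^ 2 ≤ M)
    (hB : ∃ K : ℝ, ∀ n,
      ∫⁻ z : EuclideanSpace ℝ (Fin 2) × EuclideanSpace ℝ (Fin 2),
        ENNReal.ofReal (Real.log (1 + ‖z.1 - z.2‖) * (u n z.1) ^ 2 * (v n z.2) ^ 2)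
        ≤ ENNReal.ofReal K) :
    ∃ n₀ : ℕ, ∃ C : ℝ, 0 < C ∧ ∀ n ≥ n₀,
      ∫⁻ x, ENNReal.ofReal (Real.log (1 + ‖x‖) * (v n x) ^ 2) < ENNReal.ofReal C := by
  obtain ⟨M, hM⟩ := hvb
  obtain ⟨K, hK⟩ := hB
  have hu2 n : AEMeasurable (fun x => ENNReal.ofReal (u n x ^ 2)) :=
    ((hu n).aestronglyMeasurable.aemeasurable.pow_const 2).ennreal_ofReal
  have hv2 n : AEMeasurable (fun x => ENNReal.ofReal (v n x ^ 2)) :=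
    ((hv n).aestronglyMeasurable.aemeasurable.pow_const 2).ennreal_ofReal
  obtain ⟨R, c, hc, hmass⟩ := exists_closedBall_eventually_lt_setLIntegral hu2
    (hconv.mono fun x hx => (ENNReal.continuous_ofReal.tendsto _).comp (hx.pow 2))
    (fun h => hU0 (h.mono fun x hx => by simpa using hx)) 0
  obtain ⟨n₀, hn₀⟩ := eventually_atTop.1 hmass
  have hlog (y : EuclideanSpace ℝ (Fin 2)) : 0 ≤ Real.log (1 + ‖y‖) := Real.log_nonneg (by simp)
  have hfar n (hn : n ≥ n₀) : ∫⁻ y, (ENNReal.ofReal (Real.log (1 + ‖y‖)) -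
      ENNReal.ofReal (Real.log (1 + R))) * ENNReal.ofReal (v n y ^ 2) ≤ ENNReal.ofReal K / c := by
    rw [ENNReal.le_div_iff_mul_le (Or.inl hc.ne') (Or.inr ENNReal.ofReal_ne_top), mul_comm]
    refine (mul_le_mul_left (hn₀ n hn).le _).trans <|
      (setLIntegral_closedBall_mul_lintegral_le_lintegral_prod (hu2 n) (hv2 n) R).trans ?_
    simpa only [Measure.volume_eq_prod, ENNReal.ofReal_mul (hlog _),
      ENNReal.ofReal_mul (mul_nonneg (hlog _) (sq_nonneg _))] using hK n
  obtain ⟨C, hC, hBC⟩ := ENNReal.exists_pos_lt_ofReal (a := ENNReal.ofReal K / c +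
    ENNReal.ofReal (Real.log (1 + R)) * ENNReal.ofReal M)
    (ENNReal.add_lt_top.2 ⟨ENNReal.div_lt_top ENNReal.ofReal_ne_top hc.ne', by finiteness⟩)
  refine ⟨n₀, C, hC, fun n hn => lt_of_le_of_lt ?_ hBC⟩
  calc ∫⁻ x, ENNReal.ofReal (Real.log (1 + ‖x‖) * (v n x) ^ 2)
      = ∫⁻ x, ENNReal.ofReal (Real.log (1 + ‖x‖)) * ENNReal.ofReal (v n x ^ 2) := by
        simp_rw [ENNReal.ofReal_mul (hlog _)]
    _ ≤ _ := lintegral_mul_le_lintegral_tsub_mul_add (hv2 n) _ (ENNReal.ofReal (Real.log (1 + R)))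
    _ ≤ _ := add_le_add (hfar n hn) (by gcongr; exact (hv n).lintegral_ofReal_sq_le (hM n))

theorem stmt_13 (u v : ℕ → EuclideanSpace ℝ (Fin 2) → ℝ) (U : EuclideanSpace ℝ (Fin 2) → ℝ)
    (hu : ∀ n, MemLp (u n) 2 volume) (hU : MemLp U 2 volume)
    (hU0 : ¬ U =ᵐ[volume] (0 : EuclideanSpace ℝ (Fin 2) → ℝ))
    (hconv : ∀ᵐ x ∂volume, Tendsto (fun n => u n x) atTop (nhds (U x)))
    (hv : ∀ n, MemLp (v n) 2 volume)
    (hvb : ∃ M : ℝ, ∀ n, ∫ x, (v n x) ^ 2 ≤ M)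
    (hB : ∃ K : ℝ, ∀ n,
      ∫⁻ z : EuclideanSpace ℝ (Fin 2) × EuclideanSpace ℝ (Fin 2),
        ENNReal.ofReal (Real.log (1 + ‖z.1 - z.2‖) * (u n z.1) ^ 2 * (v n z.2) ^ 2)
        ≤ ENNReal.ofReal K) :
    ∃ n₀ : ℕ, ∃ C : ℝ, 0 < C ∧ ∀ n ≥ n₀,
      ∫⁻ x, ENNReal.ofReal (Real.log (1 + ‖x‖) * (v n x) ^ 2) < ENNReal.ofReal C :=
  stmt_13_general u v U hu hU0 hconv hv hvb hB
end

section
/- Let u ∈ H¹(ℝ²) with ∫ log(1+|x|) u² < ∞, let V be continuous with inf V > 0, and suppose ‖u‖_V² + N₁(u) < N₂(u) + b|u|_p^p, where N₁(u) = (1/2π)∫∫ log(1+|x-y|)u(x)²u(y)² and N₂(u) = (1/2π)∫∫ log(1+1/|x-y|)u(x)²u(y)², b ≥ 0, p ≥ 4, and the condition (3.2) holds (in particular b|u|_p^p - (N₁(u)-N₂(u)) > ‖u‖_V² > 0). Then there exists a unique t ∈ (0,1) with t²‖u‖_V² + t⁴(N₁(u)-N₂(u)) = b t^p |u|_p^p.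 -/
open MeasureTheory

theorem stmt_16 (V u : EuclideanSpace ℝ (Fin 2) → ℝ) (b p A N1 N2 P : ℝ)
    (hVcont : Continuous V) (hVinf : ∃ V₀ > (0 : ℝ), ∀ x, V₀ ≤ V x)
    (hu : Differentiable ℝ u)
    (huw : Integrable (fun x => Real.log (1 + ‖x‖) * (u x) ^ 2))
    (hA : A = ∫ x, (‖gradient u x‖ ^ 2 + V x * (u x) ^ 2))
    (hN1 : N1 = (1 / (2 * Real.pi)) *
      ∫ x, ∫ y, Real.log (1 + ‖x - y‖) * (u x) ^ 2 * (u y) ^ 2)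
    (hN2 : N2 = (1 / (2 * Real.pi)) *
      ∫ x, ∫ y, Real.log (1 + 1 / ‖x - y‖) * (u x) ^ 2 * (u y) ^ 2)
    (hP : P = b * ∫ x, |u x| ^ p)
    (hb : 0 ≤ b) (hp : 4 ≤ p)
    (hApos : 0 < A)
    (hlt : A + N1 < N2 + P) :
    ∃! t : ℝ, t ∈ Set.Ioo (0 : ℝ) 1 ∧ t ^ 2 * A + t ^ 4 * (N1 - N2) = t ^ p * P := by
  have hP0 : 0 ≤ P := by
    rw [hP]
    exact mul_nonneg hb (integral_nonneg fun x => Real.rpow_nonneg (abs_nonneg _) p)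
  set D : ℝ := N1 - N2 with hD
  have hAD : A + D < P := by simp only [hD]; linarith
  have hq : (0:ℝ) ≤ p - 4 := by linarith
  set f : ℝ → ℝ := fun t => A / t ^ 2 + D - P * t ^ (p - 4) with hf
  -- equivalence of the equation with f t = 0
  have hiff : ∀ t : ℝ, 0 < t →
      ((t ^ 2 * A + t ^ 4 * D = t ^ p * P) ↔ f t = 0) := by
    intro t ht
    have ht2 : (t : ℝ) ^ 2 ≠ 0 := pow_ne_zero 2 ht.ne'
    have hps : t ^ p = t ^ (p - 4) * t ^ (4:ℕ) := by
      rw [← Real.rpow_natCast t 4, ← Real.rpow_add ht]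
      norm_num
    have hfiff : f t = 0 ↔ A + D * t ^ 2 = P * t ^ (p - 4) * t ^ 2 := by
      rw [hf]
      simp only
      rw [sub_eq_zero, div_add' _ _ _ ht2, div_eq_iff ht2]
    rw [hps, hfiff]
    constructor
    · intro h
      apply mul_left_cancel₀ ht2
      linear_combination h
    · intro h
      linear_combination t ^ 2 * h
  -- strict monotonicity (decreasing) on (0, 1]
  have hmono : ∀ s t : ℝ, 0 < s → s < t → f t < f s := by
    intro s t hs hst
    have hs2 : (0:ℝ) < s ^ 2 := by positivity
    have hst2 : s ^ 2 < t ^ 2 := by nlinarith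
    have h1 : A / t ^ 2 < A / s ^ 2 := div_lt_div_of_pos_left hApos hs2 hst2
    have h2 : P * s ^ (p - 4) ≤ P * t ^ (p - 4) :=
      mul_le_mul_of_nonneg_left (Real.rpow_le_rpow hs.le hst.le hq) hP0
    simp only [hf]
    linarith
  -- choice of small t₀ with f t₀ > 0
  have hPD : 0 < P - D := by linarith
  have hr : 0 < A / (P - D) := div_pos hApos hPD
  have hr1 : A / (P - D) < 1 := (div_lt_one hPD).2 (by linarith)
  set t₀ : ℝ := Real.sqrt (A / (P - D)) / 2 with ht₀
  have ht₀pos : 0 < t₀ := by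
    have : 0 < Real.sqrt (A / (P - D)) := Real.sqrt_pos.2 hr
    positivity
  have hsq1 : Real.sqrt (A / (P - D)) < 1 := by
    have := Real.sqrt_lt_sqrt hr.le hr1
    simpa using this
  have ht₀1 : t₀ < 1 := by
    rw [ht₀]; linarith
  have ht₀sq : t₀ ^ 2 = A / (P - D) / 4 := by
    rw [ht₀, div_pow, Real.sq_sqrt hr.le]
    norm_num
  have hft₀ : 0 < f t₀ := by
    have hdiv : A / t₀ ^ 2 = 4 * (P - D) := by
      rw [ht₀sq]
      field_simp
    have hle1 : t₀ ^ (p - 4) ≤ 1 := Real.rpow_le_one ht₀pos.le ht₀1.le hq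
    have hPle : P * t₀ ^ (p - 4) ≤ P := by
      calc P * t₀ ^ (p - 4) ≤ P * 1 := mul_le_mul_of_nonneg_left hle1 hP0
      _ = P := mul_one P
    simp only [hf]
    rw [hdiv]
    linarith
  have hf1 : f 1 < 0 := by
    simp only [hf, Real.one_rpow, one_pow, div_one, mul_one]
    linarith
  -- continuity of f on [t₀, 1]
  have hcont : ContinuousOn f (Set.Icc t₀ 1) := by
    intro x hx
    have hx0 : 0 < x := lt_of_lt_of_le ht₀pos hx.1
    refine ContinuousAt.continuousWithinAt ?_
    have c1 : ContinuousAt (fun t : ℝ => A / t ^ 2) x :=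
      ContinuousAt.div continuousAt_const ((continuous_pow 2).continuousAt)
        (pow_ne_zero 2 hx0.ne')
    have c2 : ContinuousAt (fun t : ℝ => t ^ (p - 4)) x :=
      Real.continuousAt_rpow_const x _ (Or.inl hx0.ne')
    exact (c1.add continuousAt_const).sub (continuousAt_const.mul c2)
  -- intermediate value theorem
  obtain ⟨t, htmem, htf⟩ :=
    intermediate_value_Icc' ht₀1.le hcont ⟨hf1.le, hft₀.le⟩
  have ht0 : 0 < t := lt_of_lt_of_le ht₀pos htmem.1
  have ht1 : t < 1 := by
    rcases lt_or_eq_of_le htmem.2 with h | h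
    · exact h
    · exfalso; rw [h] at htf; rw [htf] at hf1; exact lt_irrefl 0 hf1
  refine ⟨t, ⟨⟨ht0, ht1⟩, (hiff t ht0).2 htf⟩, ?_⟩
  rintro y ⟨⟨hy0, hy1⟩, hyeq⟩
  have hyf : f y = 0 := (hiff y hy0).1 hyeq
  rcases lt_trichotomy y t with h | h | h
  · exfalso
    have := hmono y t hy0 h
    rw [htf, hyf] at this
    exact lt_irrefl 0 this
  · exact h
  · exfalso
    have := hmono t y ht0 h
    rw [htf, hyf] at this
    exact lt_irrefl 0 this
end

section
/- Let V : ℝ² → ℝ satisfy V ≥ V₀ > 0 and 𝒱(x) := V(x) - (1/2)⟨∇V(x),x⟩ nondecreasing along rays (condition (V₂)), b ≥ 0, p ≥ 3, and let u ∈ E with J(u) = 0 and u ≠ 0, where J(u) = ∫(2|∇u|² + 𝒱(x)u² - (2b(p-1)/p)|u|^p) dx - (1/(8π))(∫u²)² + (1/(2π))∫∫log|x-y| u(x)²u(y)² dxdy. Then I(u) = (1/4)∫[V(x) + (1/2)⟨∇V(x),x⟩]u² dx + (1/(32π))(∫u²)² + (b(p-3)/(2p))∫|u|^p dx, where I(u)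 = (1/2)∫(|∇u|²+V u²) + (1/(8π))∫∫log|x-y|u²u² - (b/p)∫|u|^p. In particular I(u) ≥ (1/(32π))(∫u² dx)² > 0. -/
/-!
Subtracting a quarter of the constraint `J(u) = 0` from `I(u)` leaves exactly the right-hand
side, which is pure linear algebra on the integrals. Each remaining term is nonnegative once we
know `⟪∇V(x), x⟫ ≥ 0`. Along a ray, `φ(t) = V(t x)`, monotonicity of `φ - t φ' / 2` makes
`(φ(t) - K) / t²` nonincreasing for `t ≥ 1` (with `K = φ(1) - φ'(1) / 2`), so
`φ(t) ≤ K + φ'(1) t² / 2`; if `φ'(1) = ⟪∇V(x), x⟫` were negative, `V` would be unbounded below.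
-/

open MeasureTheory Set Filter
open scoped RealInnerProductSpace

theorem antitoneOn_sub_div_sq_of_mul_deriv_le {φ φ' : ℝ → ℝ} {a K : ℝ} (ha : 0 < a)
    (hφ : ∀ t ∈ Ici a, HasDerivAt φ (φ' t) t)
    (hle : ∀ t ∈ Ici a, t * φ' t ≤ 2 * (φ t - K)) :
    AntitoneOn (fun t => (φ t - K) / t ^ 2) (Ici a) := by
  have hpos : ∀ t ∈ Ici a, 0 < t := fun t ht => ha.trans_le ht
  have hderiv : ∀ t ∈ Ici a, HasDerivAt (fun t => (φ t - K) / t ^ 2)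
      ((φ' t * t ^ 2 - (φ t - K) * (2 * t)) / (t ^ 2) ^ 2) t := fun t ht => by
    simpa using ((hφ t ht).sub_const K).fun_div (hasDerivAt_pow 2 t)
      (pow_ne_zero 2 (hpos t ht).ne')
  refine antitoneOn_of_hasDerivWithinAt_nonpos (convex_Ici a)
    (fun t ht => (hderiv t ht).continuousAt.continuousWithinAt)
    (fun t ht => (hderiv t (interior_subset ht)).hasDerivWithinAt) fun t ht => ?_
  have ht := interior_subset ht
  have hnum : φ' t * t ^ 2 - (φ t - K) * (2 * t) = t * (t * φ' t - 2 * (φ t - K)) := by ring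
  rw [hnum]
  exact div_nonpos_of_nonpos_of_nonneg
    (mul_nonpos_of_nonneg_of_nonpos (hpos t ht).le (by linarith [hle t ht])) (by positivity)

theorem deriv_one_nonneg_of_monotoneOn {φ φ' : ℝ → ℝ} {m : ℝ}
    (hφ : ∀ t ∈ Ici 1, HasDerivAt φ (φ' t) t)
    (hmono : MonotoneOn (fun t => φ t - 1 / 2 * (t * φ' t)) (Ici 1))
    (hm : ∀ t ∈ Ici 1, m ≤ φ t) : 0 ≤ φ' 1 := by
  by_contra! hneg
  set K := φ 1 - φ' 1 / 2 with hK
  have hanti : AntitoneOn (fun t => (φ t - K) / t ^ 2) (Ici 1) :=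
    antitoneOn_sub_div_sq_of_mul_deriv_le one_pos hφ fun t ht => by
      have := hmono self_mem_Ici ht ht
      simp only at this
      linarith
  have hbound : ∀ t ∈ Ici 1, φ t ≤ K + φ' 1 / 2 * t ^ 2 := fun t ht => by
    have h := hanti self_mem_Ici ht ht
    simp only [one_pow, div_one] at h
    rw [div_le_iff₀ (pow_pos (one_pos.trans_le ht) 2),
      show φ 1 - K = φ' 1 / 2 by rw [hK]; ring] at h
    linarith
  have hlim : Tendsto (fun t : ℝ => K + φ' 1 / 2 * t ^ 2) atTop atBot :=
    tendsto_atBot_add_const_left _ K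
      ((tendsto_pow_atTop two_ne_zero).const_mul_atTop_of_neg (by linarith))
  obtain ⟨t, ht1, hlt⟩ := ((eventually_ge_atTop 1).and (hlim.eventually_lt_atBot m)).exists
  linarith [hbound t ht1, hm t ht1]

theorem inner_gradient_self_nonneg_of_monotoneOn {E : Type*} [NormedAddCommGroup E]
    [InnerProductSpace ℝ E] [CompleteSpace E] {V : E → ℝ} {m : ℝ} (x : E)
    (hV : Differentiable ℝ V) (hm : ∀ y, m ≤ V y)
    (hmono : MonotoneOn (fun t : ℝ => V (t • x) - 1 / 2 * ⟪gradient V (t • x), t • x⟫)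
      (Ioi 0)) :
    0 ≤ ⟪gradient V x, x⟫ := by
  have hray : ∀ t : ℝ, HasDerivAt (fun s : ℝ => V (s • x)) ⟪gradient V (t • x), x⟫ t := by
    intro t
    rw [inner_gradient_left]
    exact (hV _).hasFDerivAt.comp_hasDerivAt t (by simpa using (hasDerivAt_id t).smul_const x)
  simp only [real_inner_smul_right] at hmono
  simpa using deriv_one_nonneg_of_monotoneOn (fun t _ => hray t)
    (hmono.mono (Ici_subset_Ioi.2 one_pos)) fun t _ => hm _

theorem integral_sq_pos {α : Type*} [MeasurableSpace α] {μ : Measure α} {u : α → ℝ}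
    (hu2 : Integrable (fun x => u x ^ 2) μ) (hu0 : ¬ u =ᵐ[μ] 0) :
    0 < ∫ x, u x ^ 2 ∂μ := by
  refine (integral_nonneg fun x => sq_nonneg (u x)).lt_of_ne' fun h => hu0 ?_
  filter_upwards [(integral_eq_zero_iff_of_nonneg (fun x => sq_nonneg (u x)) hu2).1 h]
    with x hx
  simpa using hx

theorem stmt_18_general (V u : EuclideanSpace ℝ (Fin 2) → ℝ) (V₀ b p : ℝ)
    (hV : ContDiff ℝ 1 V) (hV₀ : 0 < V₀) (hVlb : ∀ x, V₀ ≤ V x)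
    (hmono : ∀ x : EuclideanSpace ℝ (Fin 2),
      MonotoneOn (fun t : ℝ => V (t • x) - (1 / 2) * ⟪gradient V (t • x), t • x⟫)
        (Set.Ioi (0 : ℝ)))
    (hb : 0 ≤ b) (hp : 3 ≤ p)
    (hu0 : ¬ u =ᵐ[volume] (0 : EuclideanSpace ℝ (Fin 2) → ℝ))
    (hgrad2 : Integrable (fun x => ‖gradient u x‖ ^ 2))
    (hu2 : Integrable (fun x => (u x) ^ 2))
    (hVu2 : Integrable (fun x => V x * (u x) ^ 2))
    (hdVu2 : Integrable (fun x => ⟪gradient V x, x⟫ * (u x) ^ 2))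
    (hup : Integrable (fun x => |u x| ^ p))
    (hJ : (∫ x, (2 * ‖gradient u x‖ ^ 2
            + (V x - (1 / 2) * ⟪gradient V x, x⟫) * (u x) ^ 2
            - (2 * b * (p - 1) / p) * |u x| ^ p))
          - (1 / (8 * Real.pi)) * (∫ x, (u x) ^ 2) ^ 2
          + (1 / (2 * Real.pi)) * (∫ x, ∫ y, Real.log ‖x - y‖ * (u x) ^ 2 * (u y) ^ 2)
          = 0) :
    ((1 / 2) * (∫ x, (‖gradient u x‖ ^ 2 + V x * (u x) ^ 2))
        + (1 / (8 * Real.pi)) * (∫ x, ∫ y, Real.log ‖x - y‖ * (u x) ^ 2 * (u y) ^ 2)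
        - (b / p) * ∫ x, |u x| ^ p)
      = (1 / 4) * (∫ x, (V x + (1 / 2) * ⟪gradient V x, x⟫) * (u x) ^ 2)
        + (1 / (32 * Real.pi)) * (∫ x, (u x) ^ 2) ^ 2
        + (b * (p - 3) / (2 * p)) * ∫ x, |u x| ^ p ∧
    (1 / (32 * Real.pi)) * (∫ x, (u x) ^ 2) ^ 2
      ≤ (1 / 2) * (∫ x, (‖gradient u x‖ ^ 2 + V x * (u x) ^ 2))
        + (1 / (8 * Real.pi)) * (∫ x, ∫ y, Real.log ‖x - y‖ * (u x) ^ 2 * (u y) ^ 2)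
        - (b / p) * ∫ x, |u x| ^ p ∧
    0 < (1 / 2) * (∫ x, (‖gradient u x‖ ^ 2 + V x * (u x) ^ 2))
        + (1 / (8 * Real.pi)) * (∫ x, ∫ y, Real.log ‖x - y‖ * (u x) ^ 2 * (u y) ^ 2)
        - (b / p) * ∫ x, |u x| ^ p := by
  have hQ : 0 ≤ ∫ x, (V x + 1 / 2 * ⟪gradient V x, x⟫) * u x ^ 2 :=
    integral_nonneg fun x => mul_nonneg (by linarith [hVlb x,
      inner_gradient_self_nonneg_of_monotoneOn x (hV.differentiable one_ne_zero) hVlb (hmono x)])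
      (sq_nonneg _)
  have hP : 0 ≤ b * (p - 3) / (2 * p) * ∫ x, |u x| ^ p :=
    mul_nonneg (div_nonneg (mul_nonneg hb (by linarith)) (by linarith))
      (integral_nonneg fun x => by positivity)
  have hS : 0 < 1 / (32 * Real.pi) * (∫ x, u x ^ 2) ^ 2 := by
    have := integral_sq_pos hu2 hu0
    positivity
  suffices hI : 1 / 2 * (∫ x, (‖gradient u x‖ ^ 2 + V x * u x ^ 2))
        + 1 / (8 * Real.pi) * (∫ x, ∫ y, Real.log ‖x - y‖ * u x ^ 2 * u y ^ 2)
        - b / p * ∫ x, |u x| ^ p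
      = 1 / 4 * (∫ x, (V x + 1 / 2 * ⟪gradient V x, x⟫) * u x ^ 2)
        + 1 / (32 * Real.pi) * (∫ x, u x ^ 2) ^ 2
        + b * (p - 3) / (2 * p) * ∫ x, |u x| ^ p from
    ⟨hI, hI ▸ by linarith, hI ▸ by linarith⟩
  -- `mul_assoc` gives `1 / 2 * ⟪∇V x, x⟫ * u x ^ 2` the shape `c * f x` of `integral_const_mul`
  simp only [add_mul, sub_mul, mul_assoc] at hJ ⊢
  simp (disch := fun_prop) only [integral_add, integral_sub, integral_const_mul] at hJ ⊢
  linear_combination (1 / 4) * hJ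

theorem stmt_18 (V u : EuclideanSpace ℝ (Fin 2) → ℝ) (V₀ b p : ℝ)
    (hV : ContDiff ℝ 1 V) (hV₀ : 0 < V₀) (hVlb : ∀ x, V₀ ≤ V x)
    (hmono : ∀ x : EuclideanSpace ℝ (Fin 2),
      MonotoneOn (fun t : ℝ => V (t • x) - (1 / 2) * ⟪gradient V (t • x), t • x⟫)
        (Set.Ioi (0 : ℝ)))
    (hb : 0 ≤ b) (hp : 3 ≤ p)
    (hu : Differentiable ℝ u)
    (hu0 : ¬ u =ᵐ[volume] (0 : EuclideanSpace ℝ (Fin 2) → ℝ))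
    (hgrad2 : Integrable (fun x => ‖gradient u x‖ ^ 2))
    (hu2 : Integrable (fun x => (u x) ^ 2))
    (hVu2 : Integrable (fun x => V x * (u x) ^ 2))
    (hdVu2 : Integrable (fun x => ⟪gradient V x, x⟫ * (u x) ^ 2))
    (hup : Integrable (fun x => |u x| ^ p))
    (hlog : Integrable (fun z : EuclideanSpace ℝ (Fin 2) × EuclideanSpace ℝ (Fin 2) =>
      Real.log ‖z.1 - z.2‖ * (u z.1) ^ 2 * (u z.2) ^ 2))
    (hJ : (∫ x, (2 * ‖gradient u x‖ ^ 2
            + (V x - (1 / 2) * ⟪gradient V x, x⟫) * (u x) ^ 2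
            - (2 * b * (p - 1) / p) * |u x| ^ p))
          - (1 / (8 * Real.pi)) * (∫ x, (u x) ^ 2) ^ 2
          + (1 / (2 * Real.pi)) * (∫ x, ∫ y, Real.log ‖x - y‖ * (u x) ^ 2 * (u y) ^ 2)
          = 0) :
    ((1 / 2) * (∫ x, (‖gradient u x‖ ^ 2 + V x * (u x) ^ 2))
        + (1 / (8 * Real.pi)) * (∫ x, ∫ y, Real.log ‖x - y‖ * (u x) ^ 2 * (u y) ^ 2)
        - (b / p) * ∫ x, |u x| ^ p)
      = (1 / 4) * (∫ x, (V x + (1 / 2) * ⟪gradient V x, x⟫) * (u x) ^ 2)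
        + (1 / (32 * Real.pi)) * (∫ x, (u x) ^ 2) ^ 2
        + (b * (p - 3) / (2 * p)) * ∫ x, |u x| ^ p ∧
    (1 / (32 * Real.pi)) * (∫ x, (u x) ^ 2) ^ 2
      ≤ (1 / 2) * (∫ x, (‖gradient u x‖ ^ 2 + V x * (u x) ^ 2))
        + (1 / (8 * Real.pi)) * (∫ x, ∫ y, Real.log ‖x - y‖ * (u x) ^ 2 * (u y) ^ 2)
        - (b / p) * ∫ x, |u x| ^ p ∧
    0 < (1 / 2) * (∫ x, (‖gradient u x‖ ^ 2 + V x * (u x) ^ 2))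
        + (1 / (8 * Real.pi)) * (∫ x, ∫ y, Real.log ‖x - y‖ * (u x) ^ 2 * (u y) ^ 2)
        - (b / p) * ∫ x, |u x| ^ p :=
  stmt_18_general V u V₀ b p hV hV₀ hVlb hmono hb hp hu0 hgrad2 hu2 hVu2 hdVu2 hup hJ
end
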